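/- For every n ≥ 1, the number of distinct arrays MEPal_x, as x ranges over all strings of length n over the alphabet ℕ, is at most 2^{2n−2}. -/

import Mathlib

/-- The factor `w[i..j]` of `w`, from position `i` to position `j` inclusive
(the empty string when `i > j`). -/
def factor {α : Type*} (w : List α) (i j : ℕ) : List α :=
  (w.drop i).take (j + 1 - i)

/-- A string is a palindrome if it equals its reverse. -/
def IsPal {α : Type*} (l : List α) : Prop := l.reverse = l

/-- `MEPal w c` is the length of the longest palindromic factor of `w` of the
form `w[c-r..c+r-1]` (with `r ≥ 0`, `c - r ≥ 0`, `c + r ≤ |w|`). -/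
noncomputable def MEPal {α : Type*} (w : List α) (c : ℕ) : ℕ :=
  2 * sSup {r : ℕ | r ≤ c ∧ c + r ≤ w.length ∧ IsPal (factor w (c - r) (c + r - 1))}

/-- The maximal even-palindrome array of `w`. -/
noncomputable def MEPalArr {α : Type*} (w : List α) : List ℕ :=
  (List.range w.length).map (MEPal w)

/-- `LEPal w j` is the length of the longest even-length palindromic suffix of
the prefix `w[0..j]`. -/
noncomputable def LEPal {α : Type*} (w : List α) (j : ℕ) : ℕ :=
  sSup {ℓ : ℕ | ℓ % 2 = 0 ∧ ℓ ≤ j + 1 ∧ IsPal (factor w (j + 1 - ℓ) j)}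

/-- The longest even-palindrome array of `w`. -/
noncomputable def LEPalArr {α : Type*} (w : List α) : List ℕ :=
  (List.range w.length).map (LEPal w)

/-- A positive integer `p` is a period of `u` if `u[i] = u[i+p]` for all
`0 ≤ i ≤ |u| - p - 1`. -/
def HasPeriod {α : Type*} (u : List α) (p : ℕ) : Prop :=
  ∀ i, i + p < u.length → u[i]? = u[i + p]?

/-!
Both arrays are governed by the array `LEPal`. First, `MEPal_x` is determined by `LEPal_x`: a
palindrome `x[c-r..c+r-1]` is a suffix of the longest even palindrome `Q` ending at `c+r-1`,
so it is mirrored in `Q` to the palindrome of the same length starting where `Q` starts; this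
one has a smaller centre unless it is `Q` itself, and strong induction on the centre transfers
it to any string with the same `LEPal` array.

Second, the halved values `a_j = LEPal_x[j]/2` satisfy `a_0 = 0` and `a_{j+1} ≤ a_j + 1`, so
`k ↦ 2k + 1 - a_{k+1}` is strictly increasing from `[0, n-1)` into `[0, 2n-2)`; it is therefore
recovered from its range, a subset of `[0, 2n-2)`. Hence there are at most `2^{2n-2}` arrays.
-/

section Palindrome

variable {α : Type*}

theorem IsPal.reverse_drop_take {l : List α} (hl : IsPal l) {a b : ℕ} (h : a + b ≤ l.length) :
    ((l.drop a).take b).reverse = (l.drop (l.length - a - b)).take b := by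
  rw [List.reverse_take, List.length_drop, List.reverse_drop, List.drop_take, hl]
  congr 1
  omega

theorem IsPal.drop_take {l : List α} (hl : IsPal l) {a b : ℕ} (h : a + b ≤ l.length)
    (hcentred : l.length - a - b = a) : IsPal ((l.drop a).take b) := by
  rw [IsPal, hl.reverse_drop_take h, hcentred]

theorem IsPal.isPal_drop_iff_isPal_take {l : List α} (hl : IsPal l) {m : ℕ} (h : m ≤ l.length) :
    IsPal (l.drop (l.length - m)) ↔ IsPal (l.take m) := by
  have hrev : (l.drop (l.length - m)).reverse = l.take m := by
    rw [List.reverse_drop, hl]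
    congr 1
    omega
  rw [IsPal, IsPal, hrev, ← hrev, List.reverse_reverse]
  exact eq_comm

theorem isPal_of_length_le_one {l : List α} (h : l.length ≤ 1) : IsPal l := by
  match l, h with
  | [], _ => rfl
  | [_], _ => rfl

end Palindrome

section Factor

variable {α : Type*}

theorem length_factor_le (w : List α) (i j : ℕ) : (factor w i j).length ≤ j + 1 - i :=
  List.length_take_le _ _

theorem length_factor (w : List α) {i j : ℕ} (hj : j < w.length) (hij : i ≤ j + 1) :
    (factor w i j).length = j + 1 - i := by
  simp only [factor, List.length_take, List.length_drop]
  omega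

theorem factor_drop (w : List α) (i j k : ℕ) : (factor w i j).drop k = factor w (i + k) j := by
  simp only [factor, List.drop_take, List.drop_drop]
  congr 1
  omega

theorem factor_take (w : List α) {i j m : ℕ} (hm : 1 ≤ m) (h : m ≤ j + 1 - i) :
    (factor w i j).take m = factor w i (i + m - 1) := by
  simp only [factor, List.take_take]
  congr 1
  omega

theorem isPal_factor_sub_one (w : List α) (c : ℕ) : IsPal (factor w c (c - 1)) :=
  isPal_of_length_le_one ((length_factor_le w c (c - 1)).trans (by omega))

theorem IsPal.isPal_factor_suffix_iff_prefix {w : List α} {i j m : ℕ}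
    (hQ : IsPal (factor w i j)) (hj : j < w.length) (hm : 1 ≤ m) (hmQ : m ≤ j + 1 - i) :
    IsPal (factor w (j + 1 - m) j) ↔ IsPal (factor w i (i + m - 1)) := by
  have hlen := length_factor w hj (i := i) (by omega)
  have hsuffix : (factor w i j).drop ((factor w i j).length - m) = factor w (j + 1 - m) j := by
    rw [factor_drop, hlen]
    congr 1
    omega
  rw [← hsuffix, ← factor_take w hm hmQ]
  exact hQ.isPal_drop_iff_isPal_take (by omega)

end Factor

section LEPal

variable {α : Type*}

theorem LEPal_spec (w : List α) (j : ℕ) :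
    LEPal w j % 2 = 0 ∧ LEPal w j ≤ j + 1 ∧ IsPal (factor w (j + 1 - LEPal w j) j) := by
  have hzero : IsPal (factor w (j + 1 - 0) j) := by simpa using isPal_factor_sub_one w (j + 1)
  exact Nat.sSup_mem (s := {ℓ | ℓ % 2 = 0 ∧ ℓ ≤ j + 1 ∧ IsPal (factor w (j + 1 - ℓ) j)})
    ⟨0, rfl, Nat.zero_le _, hzero⟩ ⟨j + 1, fun _ h => h.2.1⟩

theorem le_LEPal {w : List α} {j ℓ : ℕ} (hev : ℓ % 2 = 0) (hℓ : ℓ ≤ j + 1)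
    (hpal : IsPal (factor w (j + 1 - ℓ) j)) : ℓ ≤ LEPal w j :=
  le_csSup ⟨j + 1, fun _ h => h.2.1⟩ ⟨hev, hℓ, hpal⟩

theorem LEPal_div_two_le (w : List α) (j : ℕ) : LEPal w j / 2 ≤ j := by
  have := LEPal_spec w j
  omega

theorem LEPal_succ_le {w : List α} {j : ℕ} (hj : j + 1 < w.length) :
    LEPal w (j + 1) ≤ LEPal w j + 2 := by
  obtain ⟨hev, hle, hpal⟩ := LEPal_spec w (j + 1)
  set L := LEPal w (j + 1)
  by_cases hL : L < 3
  · omega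
  have hlen := length_factor w hj (i := j + 1 + 1 - L) (by omega)
  have hinner : IsPal (((factor w (j + 1 + 1 - L) (j + 1)).drop 1).take (L - 2)) :=
    hpal.drop_take (by omega) (by omega)
  rw [factor_drop, factor_take w (by omega) (by omega)] at hinner
  have : L - 2 ≤ LEPal w j := le_LEPal (by omega) (by omega) (by convert hinner using 2 <;> omega)
  omega

end LEPal

section MEPal

variable {α : Type*}

theorem isPal_factor_of_LEPal_eq {x y : List α} (hlen : x.length = y.length)
    (hLE : ∀ j < x.length, LEPal x j = LEPal y j)
    (c : ℕ) : ∀ r, r ≤ c → c + r ≤ x.length → IsPal (factor x (c - r) (c + r - 1)) →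
      IsPal (factor y (c - r) (c + r - 1)) := by
  induction c using Nat.strong_induction_on with
  | _ c ih =>
  intro r hrc hcr hpal
  rcases Nat.eq_zero_or_pos r with rfl | hr
  · exact isPal_factor_sub_one y c
  set j := c + r - 1
  set L := LEPal x j
  obtain ⟨-, hLj, hQx⟩ := LEPal_spec x j
  have hQy : IsPal (factor y (j + 1 - L) j) := by
    simpa only [← hLE j (by omega)] using (LEPal_spec y j).2.2
  have hpal' : IsPal (factor x (j + 1 - 2 * r) j) := by convert hpal using 2; omega
  have h2r : 2 * r ≤ L := le_LEPal (by omega) (by omega) hpal'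
  have hx : IsPal (factor x (j + 1 - L) (j + 1 - L + 2 * r - 1)) :=
    (hQx.isPal_factor_suffix_iff_prefix (by omega) (by omega) (by omega)).1 hpal'
  have hy : IsPal (factor y (j + 1 - L) (j + 1 - L + 2 * r - 1)) := by
    rcases h2r.eq_or_lt with hL | hL
    · convert hQy using 2; omega
    · have := ih (j + 1 - L + r) (by omega) r (by omega) (by omega)
        (by convert hx using 2 <;> omega)
      convert this using 2 <;> omega
  have := (hQy.isPal_factor_suffix_iff_prefix (by omega) (by omega) (by omega)).2 hy
  convert this using 2; omega

theorem MEPal_eq_of_LEPal_eq {x y : List α} (hlen : x.length = y.length)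
    (hLE : ∀ j < x.length, LEPal x j = LEPal y j) (c : ℕ) : MEPal x c = MEPal y c := by
  have hLE' : ∀ j < y.length, LEPal y j = LEPal x j := fun j hj => (hLE j (hlen ▸ hj)).symm
  unfold MEPal
  congr 2
  ext r
  exact ⟨fun ⟨hrc, hcr, h⟩ => ⟨hrc, hlen ▸ hcr, isPal_factor_of_LEPal_eq hlen hLE c r hrc hcr h⟩,
    fun ⟨hrc, hcr, h⟩ => ⟨hrc, hlen ▸ hcr, isPal_factor_of_LEPal_eq hlen.symm hLE' c r hrc hcr h⟩⟩

theorem MEPalArr_eq_of_LEPal_eq {x y : List α} (hlen : x.length = y.length)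
    (hLE : ∀ j < x.length, LEPal x j = LEPal y j) : MEPalArr x = MEPalArr y := by
  rw [MEPalArr, MEPalArr, hlen]
  exact List.map_congr_left fun c _ => MEPal_eq_of_LEPal_eq hlen hLE c

end MEPal

section Code

variable {α : Type*}

noncomputable def lepalPath (w : List α) (k : ℕ) : ℕ := 2 * k + 1 - LEPal w (k + 1) / 2

def lepalCode (m : ℕ) (w : List α) : Set ℕ := Set.range fun k : Fin m => lepalPath w k

theorem lepalPath_lt (w : List α) (k : ℕ) : lepalPath w k < 2 * k + 2 := by
  unfold lepalPath
  omega

theorem lepalPath_lt_lepalPath_succ {w : List α} {k : ℕ} (hk : k + 2 < w.length) :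
    lepalPath w k < lepalPath w (k + 1) := by
  have hsucc := LEPal_succ_le (j := k + 1) hk
  have hhalf := LEPal_div_two_le w (k + 1)
  have hev := (LEPal_spec w (k + 1)).1
  have hev' := (LEPal_spec w (k + 1 + 1)).1
  unfold lepalPath
  omega

theorem strictMono_lepalPath {w : List α} {m : ℕ} (hm : m ≤ w.length - 1) :
    StrictMono fun k : Fin m => lepalPath w k := by
  cases m with
  | zero => exact fun i => i.elim0
  | succ m =>
    refine Fin.strictMono_iff_lt_succ.2 fun i => ?_
    simpa using lepalPath_lt_lepalPath_succ (w := w) (k := i) (by omega)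

theorem lepalCode_subset_Iio (m : ℕ) (w : List α) : lepalCode m w ⊆ Set.Iio (2 * m) := by
  rintro _ ⟨k, rfl⟩
  have := lepalPath_lt w k
  simp only [Set.mem_Iio]
  omega

theorem LEPal_eq_of_lepalCode_eq {x y : List α} (hlen : x.length = y.length)
    (h : lepalCode (x.length - 1) x = lepalCode (x.length - 1) y) :
    ∀ j < x.length, LEPal x j = LEPal y j := by
  have hpath := ((strictMono_lepalPath le_rfl).range_inj
    (strictMono_lepalPath (w := y) (by omega))).1 h
  rintro (_ | k) hk
  · have := LEPal_spec x 0
    have := LEPal_spec y 0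
    omega
  · have hxy := congrFun hpath ⟨k, by omega⟩
    have := LEPal_div_two_le x (k + 1)
    have := LEPal_div_two_le y (k + 1)
    have := (LEPal_spec x (k + 1)).1
    have := (LEPal_spec y (k + 1)).1
    simp only [lepalPath] at hxy
    omega

end Code

theorem Set.image_eq_image_invFunOn_image {α β γ : Type*} [Nonempty α] {f : α → β} {g : α → γ}
    {s : Set α} (h : ∀ x ∈ s, ∀ y ∈ s, g x = g y → f x = f y) :
    f '' s = (f ∘ Function.invFunOn g s) '' (g '' s) := by
  rw [Set.image_image]
  refine Set.image_congr fun x hx => (h _ (Function.invFunOn_mem ⟨x, hx, rfl⟩) x hx ?_).symm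
  exact Function.invFunOn_eq ⟨x, hx, rfl⟩

theorem stmt2_general (n : ℕ) :
    {A : List ℕ | ∃ x : List ℕ, x.length = n ∧ MEPalArr x = A}.Finite ∧
    {A : List ℕ | ∃ x : List ℕ, x.length = n ∧ MEPalArr x = A}.ncard ≤ 2 ^ (2 * n - 2) := by
  set T := {x : List ℕ | x.length = n}
  have hfactors : ∀ x ∈ T, ∀ y ∈ T, lepalCode (n - 1) x = lepalCode (n - 1) y →
      MEPalArr x = MEPalArr y := by
    rintro x hx y hy h
    have hlen : x.length = y.length := hx.trans hy.symm
    exact MEPalArr_eq_of_LEPal_eq hlen (LEPal_eq_of_lepalCode_eq hlen (hx ▸ h))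
  have hcodes : lepalCode (n - 1) '' T ⊆ 𝒫 Set.Iio (2 * n - 2) := by
    rintro _ ⟨x, -, rfl⟩
    simpa [Nat.mul_sub_one] using lepalCode_subset_Iio (n - 1) x
  have hfinite : (lepalCode (n - 1) '' T).Finite := (Set.finite_Iio _).powerset.subset hcodes
  change (MEPalArr '' T).Finite ∧ (MEPalArr '' T).ncard ≤ _
  rw [Set.image_eq_image_invFunOn_image hfactors]
  refine ⟨hfinite.image _, (Set.ncard_image_le hfinite).trans ?_⟩
  calc (lepalCode (n - 1) '' T).ncard ≤ (𝒫 Set.Iio (2 * n - 2)).ncard :=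
        Set.ncard_le_ncard hcodes (Set.finite_Iio _).powerset
    _ = 2 ^ (2 * n - 2) := by rw [Set.ncard_powerset _ (Set.finite_Iio _), Set.ncard_Iio_nat]

theorem stmt2 (n : ℕ) (hn : 1 ≤ n) :
    {A : List ℕ | ∃ x : List ℕ, x.length = n ∧ MEPalArr x = A}.Finite ∧
    {A : List ℕ | ∃ x : List ℕ, x.length = n ∧ MEPalArr x = A}.ncard ≤ 2 ^ (2 * n - 2) :=
  stmt2_general n
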